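/- arXiv:2306.16202 — 8 statements merged into one kernel-verified Lean document; each statement's English description precedes it below -/
import Mathlib

section
/- For every positive integer m, T_{2m+1}(2m+1) < 0, where T_n(x) = \sum_{k=0}^n (-x)^k / k!. -/
/-!
Grouping the terms of `T_{2n+1}(x)` in pairs gives
`T_{2n+1}(x) = ∑_{j ≤ n} x^{2j}/(2j)! · (1 - x/(2j+1))`.
For `x ≥ 2n + 1` every pair is `≤ 0`, and for `x > 1` the pair `j = 0`, namely `1 - x`,
is `< 0`.
-/

noncomputable def T (n : ℕ) (x : ℝ) : ℝ := ∑ k ∈ Finset.range (n + 1), (-x) ^ k / (Nat.factorial k)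

open Finset

theorem Finset.sum_range_two_mul {M : Type*} [AddCommMonoid M] (f : ℕ → M) (n : ℕ) :
    ∑ k ∈ range (2 * n), f k = ∑ j ∈ range n, (f (2 * j) + f (2 * j + 1)) := by
  induction n with
  | zero => simp
  | succ n ih =>
    rw [Nat.mul_succ, sum_range_succ, sum_range_succ, sum_range_succ, ih, add_assoc]

lemma T_two_mul_add_one (n : ℕ) (x : ℝ) :
    T (2 * n + 1) x = ∑ j ∈ range (n + 1), x ^ (2 * j) / (2 * j).factorial * (1 - x / (2 * j + 1)) := by
  rw [T, show 2 * n + 1 + 1 = 2 * (n + 1) by ring, sum_range_two_mul]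
  refine sum_congr rfl fun j _ => ?_
  rw [(even_two_mul j).neg_pow, (odd_two_mul_add_one j).neg_pow, Nat.factorial_succ]
  push_cast
  field_simp
  ring

lemma pow_two_mul_div_factorial_mul_nonpos {j : ℕ} {x : ℝ} (hx : 2 * j + 1 ≤ x) :
    x ^ (2 * j) / (2 * j).factorial * (1 - x / (2 * j + 1)) ≤ 0 :=
  mul_nonpos_of_nonneg_of_nonpos (div_nonneg ((even_two_mul j).pow_nonneg x) (by positivity))
    (sub_nonpos.2 <| (one_le_div (by positivity)).2 hx)

lemma T_two_mul_add_one_neg {n : ℕ} {x : ℝ} (hx₁ : 1 < x) (hx : 2 * n + 1 ≤ x) :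
    T (2 * n + 1) x < 0 := by
  rw [T_two_mul_add_one]
  refine sum_neg' (fun j hj => pow_two_mul_div_factorial_mul_nonpos ?_) ⟨0, by simp, by simpa⟩
  have : (j : ℝ) ≤ n := by exact_mod_cast Nat.lt_succ_iff.1 (mem_range.1 hj)
  linarith

theorem stmt5 (m : ℕ) (hm : 1 ≤ m) : T (2 * m + 1) (2 * m + 1) < 0 := by
  have hm' : (1 : ℝ) ≤ m := by exact_mod_cast hm
  exact T_two_mul_add_one_neg (by linarith) le_rfl
end

section
/- Let c_{2m-1} denote the unique positive root of T_{2m-1}(x) = \sum_{k=0}^{2m-1}(-x)^k/k!. Then c_1 = 1 and the sequence is strictly increasing: c_{2m-1} < c_{2m+1} for all m \ge 1. -/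
lemma T_zero_right (n : ℕ) : T n 0 = 1 := by
  simp [T, Finset.sum_range_succ']

lemma T_one (x : ℝ) : T 1 x = 1 - x := by
  simp [T, Finset.sum_range_succ]
  ring

lemma continuous_T (n : ℕ) : Continuous (T n) := by
  unfold T
  fun_prop

lemma T_succ (n : ℕ) (x : ℝ) : T (n + 1) x = T n x + (-x) ^ (n + 1) / (n + 1).factorial :=
  Finset.sum_range_succ _ _

lemma T_two_mul_add_three (m : ℕ) (x : ℝ) :
    T (2 * m + 3) x = T (2 * m + 1) x + x ^ (2 * m + 2) * (2 * m + 3 - x) / (2 * m + 3).factorial := by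
  have heven : (-x) ^ (2 * m + 2) = x ^ (2 * m + 2) := Even.neg_pow ⟨m + 1, by ring⟩ x
  have hodd : (-x) ^ (2 * m + 3) = -x ^ (2 * m + 3) := Odd.neg_pow ⟨m + 1, by ring⟩ x
  rw [T_succ (2 * m + 2), T_succ (2 * m + 1), heven, hodd, Nat.factorial_succ (2 * m + 2)]
  push_cast
  field_simp
  ring

lemma T_two_mul_add_one_neg_s6 (m : ℕ) {x : ℝ} (h1 : 1 < x) (hm : 2 * m + 1 ≤ x) :
    T (2 * m + 1) x < 0 := by
  induction m with
  | zero => simpa [T_one] using h1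
  | succ m ih =>
    rw [show 2 * (m + 1) + 1 = 2 * m + 3 by ring, T_two_mul_add_three]
    push_cast at hm
    have hcorr : x ^ (2 * m + 2) * (2 * m + 3 - x) / (2 * m + 3).factorial ≤ 0 :=
      div_nonpos_of_nonpos_of_nonneg
        (mul_nonpos_of_nonneg_of_nonpos (by positivity) (by linarith)) (by positivity)
    linarith [ih (by linarith)]

lemma lt_of_T_two_mul_add_three_eq_zero (m : ℕ) {x : ℝ} (hT : T (2 * m + 3) x = 0) :
    x < 2 * m + 3 := by
  by_contra! h
  have := T_two_mul_add_one_neg_s6 (m + 1) (x := x) (by linarith) (by push_cast; linarith)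
  rw [show 2 * (m + 1) + 1 = 2 * m + 3 by ring] at this
  linarith

lemma T_two_mul_add_one_neg_of_root (m : ℕ) {x : ℝ} (hx : 0 < x) (hT : T (2 * m + 3) x = 0) :
    T (2 * m + 1) x < 0 := by
  have hlt := lt_of_T_two_mul_add_three_eq_zero m hT
  have hcorr : 0 < x ^ (2 * m + 2) * (2 * m + 3 - x) / (2 * m + 3).factorial :=
    div_pos (mul_pos (by positivity) (by linarith)) (by positivity)
  rw [T_two_mul_add_three] at hT
  linarith

lemma exists_T_eq_zero_mem_Ioo (n : ℕ) {a : ℝ} (ha : 0 < a) (hT : T n a < 0) :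
    ∃ x ∈ Set.Ioo 0 a, T n x = 0 :=
  intermediate_value_Ioo' ha.le (continuous_T n).continuousOn ⟨hT, by simp [T_zero_right]⟩

theorem stmt6 (c : ℕ → ℝ)
    (hroot : ∀ m : ℕ, 1 ≤ m → c m ∈ Set.Ioi (0 : ℝ) ∧ T (2 * m - 1) (c m) = 0)
    (huniq : ∀ m : ℕ, 1 ≤ m → ∀ x : ℝ, x ∈ Set.Ioi (0 : ℝ) → T (2 * m - 1) x = 0 → x = c m) :
    c 1 = 1 ∧ ∀ m : ℕ, 1 ≤ m → c m < c (m + 1) := by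
  constructor
  · have h := (hroot 1 le_rfl).2
    rw [T_one] at h
    linarith
  · intro m hm
    obtain ⟨k, rfl⟩ : ∃ k, m = k + 1 := ⟨m - 1, by omega⟩
    obtain ⟨hpos, hroot'⟩ := hroot (k + 2) (by omega)
    rw [show 2 * (k + 2) - 1 = 2 * k + 3 by omega] at hroot'
    obtain ⟨x, hx, hTx⟩ :=
      exists_T_eq_zero_mem_Ioo _ hpos (T_two_mul_add_one_neg_of_root k hpos hroot')
    have hxc : x = c (k + 1) :=
      huniq (k + 1) (by omega) x hx.1 (by rwa [show 2 * (k + 1) - 1 = 2 * k + 1 by omega])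
    exact hxc ▸ hx.2
end

section
/- For every positive integer m and all real x, T_{2m-2}(x) > T_{2m}(x) if and only if 0 < x < 2m, where T_n(x) = \sum_{k=0}^n (-x)^k / k!. -/
open Nat

/-!
Passing from `T (2m-2)` to `T (2m)` adds the two terms `-x^(2m-1)/(2m-1)! + x^(2m)/(2m)!`, whose sum
is `x^(2m-1) (x - 2m) / (2m)!`. Since `2m-1` is odd, this is negative exactly when `0 < x < 2m`.
-/

theorem T_add_two (n : ℕ) (x : ℝ) :
    T (n + 2) x = T n x + (-x) ^ (n + 1) / (n + 1)! + (-x) ^ (n + 2) / (n + 2)! := by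
  simp only [T, Finset.sum_range_succ]

theorem T_add_two_sub_of_even {n : ℕ} (hn : Even n) (x : ℝ) :
    T (n + 2) x - T n x = x ^ (n + 1) * (x - (n + 2)) / (n + 2)! := by
  have h_odd : (-x) ^ (n + 1) = -x ^ (n + 1) := hn.add_one.neg_pow x
  have h_even : (-x) ^ (n + 2) = x ^ (n + 2) := (hn.add even_two).neg_pow x
  rw [T_add_two, h_odd, h_even, Nat.factorial_succ (n + 1)]
  push_cast
  field_simp
  ring

theorem Odd.pow_mul_sub_neg_iff {R : Type*} [CommRing R] [LinearOrder R] [IsStrictOrderedRing R]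
    {k : ℕ} (hk : Odd k) {c : R} (hc : 0 < c) (x : R) :
    x ^ k * (x - c) < 0 ↔ 0 < x ∧ x < c := by
  rw [mul_neg_iff, hk.pow_pos_iff, hk.pow_neg_iff, sub_neg, sub_pos]
  exact or_iff_left fun ⟨hx, hcx⟩ => hc.not_gt (hcx.trans hx)

theorem stmt8_general (m : ℕ) (x : ℝ) :
    T (2 * m) x < T (2 * m - 2) x ↔ 0 < x ∧ x < 2 * m := by
  rcases m with _ | j
  · simpa using fun hx : 0 < x => hx.le
  have h_index : 2 * (j + 1) = 2 * j + 2 := by ring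
  rw [h_index, Nat.add_sub_cancel, ← sub_neg, T_add_two_sub_of_even (even_two_mul j),
    div_lt_iff₀ (by positivity), zero_mul,
    (odd_two_mul_add_one j).pow_mul_sub_neg_iff (by positivity)]
  push_cast
  ring_nf

theorem stmt8 (m : ℕ) (hm : 1 ≤ m) (x : ℝ) :
    T (2 * m) x < T (2 * m - 2) x ↔ 0 < x ∧ x < 2 * m :=
  stmt8_general m x
end

section
/- For all real x with 0 < x < 1, the following inequality holds: 1/x^2 - 1/12 < e^{-x}/(1 - e^{-x})^2. -/
/-!
Since `1 - e^{-x} = e^{-x/2} · 2 sinh (x/2)`, the right-hand side is `1 / (2 sinh (x/2))²`, and with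
`u = x/2` the claim becomes `(3 - u²) sinh² u < 3u²`. On `[0, 1]` the Taylor bound
`sinh u ≤ u + u³/6 + u⁵/100` reduces this to a polynomial inequality in `u²` whose coefficients
beyond the constant term are all negative.
-/

open Real

theorem abs_sinh_sub_le {u : ℝ} (hu : |u| ≤ 1) :
    |sinh u - (u + u ^ 3 / 6)| ≤ |u| ^ 5 / 100 := by
  have hpos := exp_bound hu (n := 5) (by norm_num)
  have hneg := exp_bound (x := -u) (by rwa [abs_neg]) (n := 5) (by norm_num)
  norm_num [Finset.sum_range_succ, Nat.factorial, Odd.neg_pow] at hpos hneg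
  rw [abs_le] at hpos hneg ⊢
  rw [sinh_eq]
  constructor <;> linarith [hpos.1, hpos.2, hneg.1, hneg.2]

theorem sinh_le_of_nonneg_of_le_one {u : ℝ} (h0 : 0 ≤ u) (h1 : u ≤ 1) :
    sinh u ≤ u + u ^ 3 / 6 + u ^ 5 / 100 := by
  have h := abs_sinh_sub_le (abs_le.2 ⟨by linarith, h1⟩)
  rw [abs_of_nonneg h0] at h
  linarith [(abs_le.1 h).2]

theorem sub_sq_mul_sinh_sq_lt {u : ℝ} (h0 : 0 < u) (h1 : u ≤ 1) :
    (3 - u ^ 2) * sinh u ^ 2 < 3 * u ^ 2 :=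
  calc (3 - u ^ 2) * sinh u ^ 2 ≤ (3 - u ^ 2) * (u + u ^ 3 / 6 + u ^ 5 / 100) ^ 2 := by
        have : u ^ 2 ≤ 3 := by nlinarith
        have : 0 ≤ sinh u := (sinh_pos_iff.2 h0).le
        gcongr
        exact sinh_le_of_nonneg_of_le_one h0.le h1
    _ < 3 * u ^ 2 := by
        nlinarith [pow_pos h0 4, pow_pos h0 6, pow_pos h0 8, pow_pos h0 10, pow_pos h0 12]

theorem one_div_sq_sub_lt_one_div_two_mul_sinh_sq {u : ℝ} (h0 : 0 < u) (h1 : u ≤ 1) :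
    1 / (2 * u) ^ 2 - 1 / 12 < 1 / (2 * sinh u) ^ 2 := by
  have hs : 0 < sinh u := sinh_pos_iff.2 h0
  have key := sub_sq_mul_sinh_sq_lt h0 h1
  rw [div_sub_div _ _ (by positivity) (by norm_num), div_lt_div_iff₀ (by positivity) (by positivity)]
  nlinarith

theorem exp_neg_div_one_sub_exp_neg_sq (x : ℝ) :
    exp (-x) / (1 - exp (-x)) ^ 2 = 1 / (2 * sinh (x / 2)) ^ 2 := by
  have he : exp (-x) = exp (-(x / 2)) ^ 2 := by rw [← exp_nat_mul]; congr 1; ring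
  have hd : 1 - exp (-x) = exp (-(x / 2)) * (2 * sinh (x / 2)) := by
    rw [sinh_eq, he, mul_div_cancel₀ _ two_ne_zero, mul_sub, ← exp_add, neg_add_cancel, exp_zero]; ring
  rw [hd, mul_pow, he, ← div_div, div_self (by positivity)]

theorem stmt10 (x : ℝ) (hx1 : 0 < x) (hx2 : x < 1) :
    1 / x ^ 2 - 1 / 12 < Real.exp (-x) / (1 - Real.exp (-x)) ^ 2 := by
  rw [exp_neg_div_one_sub_exp_neg_sq]
  simpa [mul_div_cancel₀] using
    one_div_sq_sub_lt_one_div_two_mul_sinh_sq (u := x / 2) (by positivity) (by linarith)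
end

section
/- For all real x with 0 < x < 1, the inequality g(x) = -x^3 e^{-2x} - x^3 e^{-x} - 2e^{-3x} + 6e^{-2x} - 6e^{-x} + 2 > 0 holds. -/
/-!
With `u = x / 2` the expression equals `16 e^{-3u} (sinh³ u - u³ cosh u)`, so it is positive as
soon as `u³ cosh u < sinh³ u` (Lazarević's inequality), which holds for every `u > 0`.
Since `sinh³ u = (sinh 3u - 3 sinh u) / 4`, the coefficient of `u^{2n+3}` in `sinh³ u` is
`(3^{2n+3} - 3) / (4 (2n+3)!)`, while in `u³ cosh u` it is `1 / (2n)!`. The first dominates the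
second for every `n`, with equality for `n = 0, 1` and strict inequality from `n = 2` on.
-/

open Real Nat

lemma four_mul_add_three_le_three_pow (n : ℕ) :
    4 * ((2 * n + 1) * (2 * n + 2) * (2 * n + 3)) + 3 ≤ 3 ^ (2 * n + 3) := by
  induction n with
  | zero => norm_num
  | succ n ih =>
    calc 4 * ((2 * (n + 1) + 1) * (2 * (n + 1) + 2) * (2 * (n + 1) + 3)) + 3
        = 4 * ((2 * n + 3) * (2 * n + 4) * (2 * n + 5)) + 3 := by ring
      _ ≤ 9 * (4 * ((2 * n + 1) * (2 * n + 2) * (2 * n + 3)) + 3) := by ring_nf; omega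
      _ ≤ 9 * 3 ^ (2 * n + 3) := by omega
      _ = 3 ^ (2 * (n + 1) + 3) := by ring

lemma inv_factorial_le_three_pow_sub_three_div (n : ℕ) :
    ((2 * n)! : ℝ)⁻¹ ≤ (3 ^ (2 * n + 3) - 3) / 4 / (2 * n + 3)! := by
  have hfac : ((2 * n + 3)! : ℝ) = (2 * n + 1) * (2 * n + 2) * (2 * n + 3) * (2 * n)! := by
    push_cast [Nat.factorial_succ]
    ring
  have hcoef : 4 * ((2 * n + 1) * (2 * n + 2) * (2 * n + 3) : ℝ) + 3 ≤ 3 ^ (2 * n + 3) := by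
    exact_mod_cast four_mul_add_three_le_three_pow n
  rw [hfac, div_div, le_div_iff₀ (by positivity), inv_mul_eq_div, div_le_iff₀ (by positivity),
    ← mul_assoc]
  gcongr
  linarith

namespace Real

lemma hasSum_sinh_pow_three (u : ℝ) :
    HasSum (fun n : ℕ ↦ (3 ^ (2 * n + 3) - 3) / 4 * u ^ (2 * n + 3) / (2 * n + 3)!)
      (sinh u ^ 3) := by
  have h := ((hasSum_sinh (3 * u)).sub ((hasSum_sinh u).mul_left 3)).div_const 4
  rw [sinh_three_mul, add_sub_cancel_right, mul_div_cancel_left₀ _ four_ne_zero] at h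
  have hshift := (hasSum_nat_add_iff' 1).2 h
  simp only [Finset.sum_range_one, mul_zero, zero_add, pow_one, factorial_one, cast_one, div_one,
    sub_self, zero_div, sub_zero] at hshift
  exact hshift.congr_fun fun n ↦ by rw [show 2 * (n + 1) + 1 = 2 * n + 3 by ring]; ring

lemma hasSum_pow_three_mul_cosh (u : ℝ) :
    HasSum (fun n : ℕ ↦ u ^ (2 * n + 3) / (2 * n)!) (u ^ 3 * cosh u) :=
  ((hasSum_cosh u).mul_left (u ^ 3)).congr_fun fun n ↦ by ring

theorem pow_three_mul_cosh_lt_sinh_pow_three {u : ℝ} (hu : 0 < u) :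
    u ^ 3 * cosh u < sinh u ^ 3 := by
  refine hasSum_lt (fun n ↦ ?_) (i := 2) ?_ (hasSum_pow_three_mul_cosh u)
    (hasSum_sinh_pow_three u)
  · rw [div_eq_mul_inv, mul_div_right_comm, mul_comm]
    gcongr
    exact inv_factorial_le_three_pow_sub_three_div n
  · norm_num [Nat.factorial]
    linarith [pow_pos hu 7]

lemma exp_combination_eq_sinh_pow_three_sub (x : ℝ) :
    -x ^ 3 * exp (-2 * x) - x ^ 3 * exp (-x) - 2 * exp (-3 * x) + 6 * exp (-2 * x)
      - 6 * exp (-x) + 2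
      = 16 * exp (-(3 * (x / 2))) * (sinh (x / 2) ^ 3 - (x / 2) ^ 3 * cosh (x / 2)) := by
  have hexp (n : ℕ) : exp (-(n * (x / 2))) = exp (-(x / 2)) ^ n := by
    rw [← exp_nat_mul, mul_neg]
  have hinv : exp (x / 2) = (exp (-(x / 2)))⁻¹ := by rw [exp_neg, inv_inv]
  rw [sinh_eq, cosh_eq, hinv, show -x = -((2 : ℕ) * (x / 2)) by push_cast; ring,
    show -2 * x = -((4 : ℕ) * (x / 2)) by push_cast; ring,
    show -3 * x = -((6 : ℕ) * (x / 2)) by push_cast; ring,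
    show -(3 * (x / 2)) = -((3 : ℕ) * (x / 2)) by push_cast; ring, hexp, hexp, hexp, hexp]
  field_simp
  ring

end Real

theorem stmt13_general (x : ℝ) (hx1 : 0 < x) :
    -x ^ 3 * Real.exp (-2 * x) - x ^ 3 * Real.exp (-x) - 2 * Real.exp (-3 * x)
      + 6 * Real.exp (-2 * x) - 6 * Real.exp (-x) + 2 > 0 := by
  have hgap := sub_pos.2 (pow_three_mul_cosh_lt_sinh_pow_three (half_pos hx1))
  rw [exp_combination_eq_sinh_pow_three_sub]
  positivity

theorem stmt13 (x : ℝ) (hx1 : 0 < x) (hx2 : x < 1) :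
    -x ^ 3 * Real.exp (-2 * x) - x ^ 3 * Real.exp (-x) - 2 * Real.exp (-3 * x)
      + 6 * Real.exp (-2 * x) - 6 * Real.exp (-x) + 2 > 0 :=
  stmt13_general x hx1
end

section
/- For all real a \le 0 and all real x with 0 \le x \le 1, it holds that e^{ax} \ge ax(1-x) + x^2(e^a - 1) + 1. -/
/-!
Put `φ t = exp t - 1 - t`; the claim is `x ^ 2 * φ a ≤ φ (a * x)`. The difference
`g t = φ (t * x) - x ^ 2 * φ t` has derivative `x * (exp (t * x) - 1 - x * (exp t - 1))`, which is
nonpositive by convexity of `exp` (Bernoulli's inequality for `(exp t) ^ x`). So `g` is antitone,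
and `g a ≥ g 0 = 0` for `a ≤ 0`.
-/

open Real

lemma Real.exp_mul_le_one_add_mul_exp_sub_one {x : ℝ} (hx0 : 0 ≤ x) (hx1 : x ≤ 1) (t : ℝ) :
    exp (t * x) ≤ 1 + x * (exp t - 1) := by
  have h := rpow_one_add_le_one_add_mul_self (s := exp t - 1) (by linarith [exp_pos t]) hx0 hx1
  rwa [add_sub_cancel, ← exp_mul] at h

lemma hasDerivAt_exp_mul_sub_sq_mul (x t : ℝ) :
    HasDerivAt (fun t => (exp (t * x) - 1 - t * x) - x ^ 2 * (exp t - 1 - t))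
      (x * (exp (t * x) - 1 - x * (exp t - 1))) t := by
  have hlin : HasDerivAt (fun t : ℝ => t * x) x t := hasDerivAt_mul_const x
  have hφ : HasDerivAt (fun t => exp t - 1 - t) (exp t - 1) t := by
    simpa using ((hasDerivAt_exp t).sub_const 1).fun_sub (hasDerivAt_id t)
  exact (((hlin.exp.sub_const 1).fun_sub hlin).fun_sub (hφ.const_mul (x ^ 2))).congr_deriv
    (by ring)

lemma antitone_exp_mul_sub_sq_mul {x : ℝ} (hx0 : 0 ≤ x) (hx1 : x ≤ 1) :
    Antitone fun t => (exp (t * x) - 1 - t * x) - x ^ 2 * (exp t - 1 - t) :=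
  antitone_of_hasDerivAt_nonpos (hasDerivAt_exp_mul_sub_sq_mul x) fun t =>
    mul_nonpos_of_nonneg_of_nonpos hx0
      (by linarith [exp_mul_le_one_add_mul_exp_sub_one hx0 hx1 t])

theorem stmt16 (a : ℝ) (ha : a ≤ 0) (x : ℝ) (hx1 : 0 ≤ x) (hx2 : x ≤ 1) :
    Real.exp (a * x) ≥ a * x * (1 - x) + x ^ 2 * (Real.exp a - 1) + 1 := by
  have h := antitone_exp_mul_sub_sq_mul hx1 hx2 ha
  simp only [zero_mul, exp_zero, sub_self, mul_zero] at h
  linarith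
end

section
/- For all real a \ge 0 and all real x with 0 \le x \le 1, it holds that e^{ax} \le ax(1-x) + x^2(e^a - 1) + 1. -/
/-!
Expanding both exponentials, `exp t - 1 - t = ∑_{n ≥ 2} tⁿ / n!`. For `a ≥ 0` and `0 ≤ x ≤ 1`
every term satisfies `(a x)ⁿ = aⁿ xⁿ ≤ x² aⁿ` when `n ≥ 2`, so
`exp (a x) - 1 - a x ≤ x² (exp a - 1 - a)`, which rearranges to the claim.
-/

open Real Nat

lemma Real.hasSum_exp_sub_one_sub (t : ℝ) :
    HasSum (fun n : ℕ => t ^ (n + 2) / (n + 2)!) (exp t - 1 - t) := by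
  have h := (hasSum_nat_add_iff' 2).mpr (NormedSpace.expSeries_div_hasSum_exp t)
  simpa [← exp_eq_exp_ℝ, Finset.sum_range_succ, sub_sub] using h

lemma Real.exp_mul_sub_one_sub_le {a x : ℝ} (ha : 0 ≤ a) (hx0 : 0 ≤ x) (hx1 : x ≤ 1) :
    exp (a * x) - 1 - a * x ≤ x ^ 2 * (exp a - 1 - a) := by
  refine hasSum_le (fun n => ?_) (hasSum_exp_sub_one_sub (a * x))
    ((hasSum_exp_sub_one_sub a).mul_left (x ^ 2))
  have hxn : x ^ (n + 2) ≤ x ^ 2 := pow_le_pow_of_le_one hx0 hx1 (by omega)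
  rw [mul_pow, mul_div_assoc', mul_comm (x ^ 2)]
  gcongr

theorem stmt17 (a : ℝ) (ha : 0 ≤ a) (x : ℝ) (hx1 : 0 ≤ x) (hx2 : x ≤ 1) :
    Real.exp (a * x) ≤ a * x * (1 - x) + x ^ 2 * (Real.exp a - 1) + 1 := by
  linear_combination Real.exp_mul_sub_one_sub_le ha hx1 hx2
end

section
/- For all real a > 0 and all real x with x > 1, it holds that e^{ax} \ge ax(1-x) + x^2(e^a - 1) + 1, and for a < 0 and x > 1 the reverse inequality e^{ax} \le ax(1-x) + x^2(e^a - 1) + 1 holds. -/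
/-!
For fixed `x ≥ 1` the function `t ↦ (exp (t x) - t x - 1) - x² (exp t - t - 1)` vanishes at `0`,
and its derivative `x ((exp (t x) - 1) - x (exp t - 1))` is nonnegative by Bernoulli's inequality
`(1 + s) ^ x ≥ 1 + x s` applied to `1 + s = exp t`. Hence it is nonnegative for `t > 0` and
nonpositive for `t < 0`, which are the two inequalities.
-/

open Real

lemma mul_exp_sub_one_le_exp_mul_sub_one {x : ℝ} (hx : 1 ≤ x) (t : ℝ) :
    x * (exp t - 1) ≤ exp (t * x) - 1 := by
  have h := one_add_mul_self_le_rpow_one_add (s := exp t - 1)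
    (by linarith [exp_pos t]) hx
  rw [add_sub_cancel, ← exp_log (exp_pos t), ← exp_mul, log_exp] at h
  linarith

lemma monotone_exp_mul_sub_sq_mul_exp {x : ℝ} (hx : 1 ≤ x) :
    Monotone fun t ↦ exp (t * x) - t * x - 1 - x ^ 2 * (exp t - t - 1) := by
  refine monotone_of_hasDerivAt_nonneg
    (f' := fun t ↦ exp (t * x) * x - x - x ^ 2 * (exp t - 1)) (fun t ↦ ?_) fun t ↦ ?_
  · have hmul : HasDerivAt (fun t : ℝ ↦ t * x) x t := hasDerivAt_mul_const x
    exact (((hmul.exp.sub hmul).sub_const 1).sub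
      ((((hasDerivAt_exp t).sub (hasDerivAt_id t)).sub_const 1).const_mul (x ^ 2)))
  · have hbern := mul_exp_sub_one_le_exp_mul_sub_one hx t
    show 0 ≤ exp (t * x) * x - x - x ^ 2 * (exp t - 1)
    nlinarith

theorem stmt19 (a : ℝ) (x : ℝ) (hx : 1 < x) :
    (0 < a → Real.exp (a * x) ≥ a * x * (1 - x) + x ^ 2 * (Real.exp a - 1) + 1) ∧
    (a < 0 → Real.exp (a * x) ≤ a * x * (1 - x) + x ^ 2 * (Real.exp a - 1) + 1) := by
  have hmono := monotone_exp_mul_sub_sq_mul_exp hx.le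
  refine ⟨fun ha ↦ ?_, fun ha ↦ ?_⟩
  · have h := hmono ha.le
    simp only [zero_mul, exp_zero] at h
    linarith
  · have h := hmono ha.le
    simp only [zero_mul, exp_zero] at h
    linarith
end
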